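/- arXiv:1612.05614 — 6 statements merged into one kernel-verified Lean document; each statement's English description precedes it below -/
import Mathlib

section
/- Let f : ℝⁿ → ℝ be differentiable with L-Lipschitz gradient (L > 0), let α ∈ (0,1) and σ ∈ (0,1), let 0 < a ≤ b, and let H be an n×n symmetric positive definite matrix all of whose eigenvalues lie in [a, b]. Fix x ∈ ℝⁿ and set v = −H⁻¹∇f(x). Then for every step size η with 0 < η ≤ 2(1−α)a²/(bL), the Armijo condition f(x + ηv) ≤ f(x) + α η ⟨∇f(x), v⟩ holds. In particular, there exists a nonnegative integer s such that f(x + σˢ v) ≤ f(x) + α σˢ ⟨∇f(x), v⟩, and this holds for every integer s ≥ max{0, log(2(1−α)a²/(bL)) / log σ}. -/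
/-!
Along the ray `t ↦ x + t • v` the `L`-Lipschitz gradient gives the quadratic upper bound
`f (x + η • v) ≤ f x + η ⟪∇f x, v⟫ + L η² ‖v‖² / 2`. Since `H v = -∇f x`, the Rayleigh bound
`⟪v, H v⟫ ≥ a ‖v‖²` makes `v` a direction of sufficient descent, `⟪∇f x, v⟫ ≤ -a ‖v‖²`, so the
quadratic term is absorbed by `(1 - α) η ⟪∇f x, v⟫` as soon as `η L ≤ 2 (1 - α) a`; the step bound
`2 (1 - α) a² / (b L)` is below `2 (1 - α) a / L` because `a ≤ b`.
-/

open scoped RealInnerProductSpace Matrix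

section Descent

variable {E : Type*} [NormedAddCommGroup E] [InnerProductSpace ℝ E] [CompleteSpace E]
  {f : E → ℝ} {f' : E → E} {L : ℝ}

theorem HasGradientAt.hasDerivAt_comp_add_smul {g x w : E} {t : ℝ}
    (hf : HasGradientAt f g (x + t • w)) : HasDerivAt (fun t : ℝ => f (x + t • w)) ⟪g, w⟫ t := by
  have hline : HasDerivAt (fun t : ℝ => x + t • w) w t := by
    simpa using ((hasDerivAt_id t).smul_const w).const_add x
  have := hf.hasFDerivAt.comp_hasDerivAt t hline
  simp only [Function.comp_def, InnerProductSpace.toDual_apply_apply] at this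
  exact this

theorem apply_add_le_of_lipschitz_gradient (hf : ∀ x, HasGradientAt f (f' x) x)
    (hlip : ∀ x y, ‖f' x - f' y‖ ≤ L * ‖x - y‖) (x w : E) :
    f (x + w) ≤ f x + ⟪f' x, w⟫ + L / 2 * ‖w‖ ^ 2 := by
  set φ : ℝ → ℝ := fun t => f (x + t • w) - t * ⟪f' x, w⟫ - L / 2 * t ^ 2 * ‖w‖ ^ 2
  have hφ : ∀ t, HasDerivAt φ (⟪f' (x + t • w) - f' x, w⟫ - L * t * ‖w‖ ^ 2) t := by
    intro t
    have := (((hf (x + t • w)).hasDerivAt_comp_add_smul).sub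
      ((hasDerivAt_id t).mul_const ⟪f' x, w⟫)).sub
      (((hasDerivAt_pow 2 t).const_mul (L / 2)).mul_const (‖w‖ ^ 2))
    refine this.congr_deriv ?_
    rw [inner_sub_left]
    ring
  have hφ_nonpos : ∀ t ∈ interior (Set.Icc (0 : ℝ) 1),
      ⟪f' (x + t • w) - f' x, w⟫ - L * t * ‖w‖ ^ 2 ≤ 0 := by
    intro t ht
    rw [interior_Icc] at ht
    rw [sub_nonpos]
    have hgrad : ‖f' (x + t • w) - f' x‖ ≤ L * t * ‖w‖ := by
      simpa [norm_smul, abs_of_pos ht.1, mul_assoc] using hlip (x + t • w) x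
    calc ⟪f' (x + t • w) - f' x, w⟫ ≤ ‖f' (x + t • w) - f' x‖ * ‖w‖ := real_inner_le_norm _ _
      _ ≤ L * t * ‖w‖ * ‖w‖ := mul_le_mul_of_nonneg_right hgrad (norm_nonneg w)
      _ = L * t * ‖w‖ ^ 2 := by ring
  have hanti : AntitoneOn φ (Set.Icc 0 1) :=
    antitoneOn_of_hasDerivWithinAt_nonpos (convex_Icc 0 1)
      (HasDerivAt.continuousOn fun t _ => hφ t) (fun t _ => (hφ t).hasDerivWithinAt) hφ_nonpos
  have hφ10 := hanti (Set.left_mem_Icc.2 zero_le_one) (Set.right_mem_Icc.2 zero_le_one) zero_le_one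
  simp only [φ, zero_smul, add_zero, one_smul] at hφ10
  linarith

theorem armijo_of_inner_le_neg_mul_norm_sq (hf : ∀ x, HasGradientAt f (f' x) x)
    (hlip : ∀ x y, ‖f' x - f' y‖ ≤ L * ‖x - y‖) {x v : E} {α μ η : ℝ} (hα : α ≤ 1)
    (hdir : ⟪f' x, v⟫ ≤ -(μ * ‖v‖ ^ 2)) (hη : 0 ≤ η) (hηL : η * L ≤ 2 * (1 - α) * μ) :
    f (x + η • v) ≤ f x + α * η * ⟪f' x, v⟫ := by
  have hquad := apply_add_le_of_lipschitz_gradient hf hlip x (η • v)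
  rw [inner_smul_right, norm_smul, Real.norm_of_nonneg hη] at hquad
  have h1 := mul_le_mul_of_nonneg_left hdir (mul_nonneg (sub_nonneg.2 hα) hη)
  have h2 := mul_le_mul_of_nonneg_right hηL (mul_nonneg hη (sq_nonneg ‖v‖))
  nlinarith

end Descent

theorem Matrix.IsHermitian.mul_norm_sq_le_inner_toEuclideanLin {ι : Type*} [Fintype ι]
    [DecidableEq ι] {H : Matrix ι ι ℝ} (hH : H.IsHermitian) {a : ℝ}
    (ha : ∀ i, a ≤ hH.eigenvalues i) (z : EuclideanSpace ℝ ι) :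
    a * ‖z‖ ^ 2 ≤ ⟪z, Matrix.toEuclideanLin H z⟫ := by
  set B := hH.eigenvectorBasis
  have hB : ∀ i, Matrix.toEuclideanLin H (B i) = hH.eigenvalues i • B i := fun i => by
    ext j
    simpa [Matrix.toLpLin_apply] using congrFun (hH.mulVec_eigenvectorBasis i) j
  have hsymm := Matrix.isSymmetric_toEuclideanLin_iff.mpr hH
  have hcoord : ∀ i, ⟪z, B i⟫ * ⟪B i, Matrix.toEuclideanLin H z⟫ =
      hH.eigenvalues i * ⟪B i, z⟫ ^ 2 := fun i => by
    rw [← hsymm, hB, real_inner_smul_left, real_inner_comm z]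
    ring
  rw [← B.sum_inner_mul_inner, ← real_inner_self_eq_norm_sq, ← B.sum_inner_mul_inner,
    Finset.mul_sum]
  refine Finset.sum_le_sum fun i _ => ?_
  rw [hcoord, real_inner_comm z, ← sq]
  exact mul_le_mul_of_nonneg_right (ha i) (sq_nonneg _)

theorem Matrix.PosDef.inner_le_neg_mul_norm_sq_of_eq_neg_inv_mulVec {ι : Type*} [Fintype ι]
    [DecidableEq ι] {H : Matrix ι ι ℝ} (hH : H.PosDef) {a : ℝ}
    (ha : ∀ i, a ≤ hH.1.eigenvalues i) {g v : EuclideanSpace ℝ ι}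
    (hv : ∀ i, v i = -(H⁻¹ *ᵥ g) i) :
    ⟪g, v⟫ ≤ -(a * ‖v‖ ^ 2) := by
  have hHv : Matrix.toEuclideanLin H v = -g := by
    have hv' : (v : ι → ℝ) = -(H⁻¹ *ᵥ g) := funext hv
    ext i
    rw [Matrix.toLpLin_apply, hv', Matrix.mulVec_neg, Matrix.mulVec_mulVec,
      Matrix.mul_nonsing_inv _ (isUnit_iff_ne_zero.2 hH.det_pos.ne'), Matrix.one_mulVec]
    rfl
  have hray := hH.1.mul_norm_sq_le_inner_toEuclideanLin ha v
  rw [hHv, inner_neg_right, real_inner_comm] at hray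
  linarith

theorem Real.pow_le_of_log_div_log_le {σ c : ℝ} (hσ0 : 0 < σ) (hσ1 : σ < 1) (hc : 0 < c)
    {s : ℕ} (hs : Real.log c / Real.log σ ≤ s) : σ ^ s ≤ c := by
  rw [div_le_iff_of_neg (Real.log_neg hσ0 hσ1)] at hs
  rwa [← Real.log_le_log_iff (pow_pos hσ0 s) hc, Real.log_pow]

/-- For `f` differentiable with `L`-Lipschitz gradient, `H` symmetric positive
definite with eigenvalues in `[a, b]`, and `v = −H⁻¹∇f(x)`, the Armijo condition holds for every
step size `0 < η ≤ 2(1−α)a²/(bL)`; in particular it holds for `η = σˢ` for some natural `s`, and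
for every natural `s ≥ max{0, log(2(1−α)a²/(bL))/log σ}`. -/
theorem armijo_backtracking_terminates {n : ℕ}
    (f : EuclideanSpace ℝ (Fin n) → ℝ)
    (f' : EuclideanSpace ℝ (Fin n) → EuclideanSpace ℝ (Fin n))
    (hf : ∀ x, HasGradientAt f (f' x) x)
    (L : ℝ) (hL : 0 < L)
    (hlip : ∀ x y, ‖f' x - f' y‖ ≤ L * ‖x - y‖)
    (α : ℝ) (hα : α ∈ Set.Ioo (0:ℝ) 1)
    (σ : ℝ) (hσ : σ ∈ Set.Ioo (0:ℝ) 1)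
    (a b : ℝ) (ha : 0 < a) (hab : a ≤ b)
    (H : Matrix (Fin n) (Fin n) ℝ) (hH : H.PosDef)
    (heig : ∀ i, hH.1.eigenvalues i ∈ Set.Icc a b)
    (x : EuclideanSpace ℝ (Fin n)) (v : EuclideanSpace ℝ (Fin n))
    (hv : ∀ i, v i = -(H⁻¹.mulVec (fun j => f' x j) i)) :
    (∀ η : ℝ, 0 < η → η ≤ 2 * (1 - α) * a^2 / (b * L) →
        f (x + η • v) ≤ f x + α * η * ⟪f' x, v⟫)
    ∧ (∃ s : ℕ, f (x + σ^s • v) ≤ f x + α * σ^s * ⟪f' x, v⟫)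
    ∧ (∀ s : ℕ, (s : ℝ) ≥ max 0 (Real.log (2 * (1 - α) * a^2 / (b * L)) / Real.log σ) →
        f (x + σ^s • v) ≤ f x + α * σ^s * ⟪f' x, v⟫) := by
  have hb : 0 < b := ha.trans_le hab
  have h1α : 0 < 1 - α := sub_pos.2 hα.2
  have hdir := hH.inner_le_neg_mul_norm_sq_of_eq_neg_inv_mulVec (fun i => (heig i).1) hv
  have armijo : ∀ η : ℝ, 0 < η → η ≤ 2 * (1 - α) * a^2 / (b * L) →
      f (x + η • v) ≤ f x + α * η * ⟪f' x, v⟫ := by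
    intro η hη hηc
    rw [le_div_iff₀ (mul_pos hb hL)] at hηc
    have hηL : η * L * b ≤ 2 * (1 - α) * a * b := by
      nlinarith [mul_le_mul_of_nonneg_left hab (mul_pos h1α ha).le]
    exact armijo_of_inner_le_neg_mul_norm_sq hf hlip hα.2.le hdir hη.le
      (le_of_mul_le_mul_right hηL hb)
  have backtrack : ∀ s : ℕ,
      (s : ℝ) ≥ max 0 (Real.log (2 * (1 - α) * a^2 / (b * L)) / Real.log σ) →
      f (x + σ^s • v) ≤ f x + α * σ^s * ⟪f' x, v⟫ := fun s hs =>
    armijo _ (pow_pos hσ.1 s) <| Real.pow_le_of_log_div_log_le hσ.1 hσ.2 (by positivity)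
      ((le_max_right _ _).trans hs)
  exact ⟨armijo, ⟨_, backtrack _ (Nat.le_ceil _)⟩, backtrack⟩
end

section
/- Let f : ℝⁿ → ℝ be differentiable and coercive with L-Lipschitz gradient, and let H : ℝⁿ → ℝ^{n×n} be a continuous map into the symmetric positive definite matrices. Fix α, σ ∈ (0,1) and x₀ ∈ ℝⁿ, and generate the sequence x_{k+1} = ψ(x_k), where ψ(x) = x + σ^{s_x} v_x, v_x = −H(x)⁻¹∇f(x), and s_x is the smallest nonnegative integer s for which f(x + σˢ v_x) ≤ f(x) + α σˢ ⟨∇f(x), v_x⟩. Then: (i) ‖∇f(x_k)‖ → 0 as k → ∞; (ii) ‖x_{k+1} − x_k‖ → 0; (iii) every limit point of the sequence (x_k) is a stationary point of f (a point x with ∇f(x) = 0); and (iv) the set of limit points of (x_k) is compact and connected. -/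
/-!
Since `v = -H⁻¹ ∇f` is a descent direction, every Armijo step decreases `f`, so the iterates stay
in the compact sublevel set `{f ≤ f x₀}`. There `H⁻¹` is uniformly positive definite and bounded,
and the descent lemma for an `L`-Lipschitz gradient bounds the backtracking exponent, so each step
decreases `f` by at least `τ ‖∇f(x_k)‖²` for a fixed `τ > 0`. As `f` is bounded below on the
sublevel set, `∇f(x_k) → 0`; hence the steps tend to zero and all cluster points are stationary.
Finally, a sequence in a compact set whose steps tend to zero cannot jump between neighbourhoods
of two separated parts of its cluster set, which is therefore connected.
-/

open scoped RealInnerProductSpace Topology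
open Filter Metric Set

theorem tendsto_zero_of_le_sub_succ {u a : ℕ → ℝ} (hbdd : BddBelow (range u))
    (ha : ∀ k, 0 ≤ a k) (h : ∀ k, a k ≤ u k - u (k + 1)) : Tendsto a atTop (𝓝 0) := by
  have hu : Tendsto u atTop (𝓝 (⨅ k, u k)) :=
    tendsto_atTop_ciInf (antitone_nat_of_succ_le fun k => by linarith [ha k, h k]) hbdd
  have hdiff : Tendsto (fun k => u k - u (k + 1)) atTop (𝓝 0) := by
    simpa using hu.sub (hu.comp (tendsto_add_atTop_nat 1))
  exact squeeze_zero ha h hdiff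

section Armijo

variable {E : Type*} [NormedAddCommGroup E] [InnerProductSpace ℝ E]

theorem LipschitzWith.le_add_inner_add_mul_sq [CompleteSpace E] {f : E → ℝ} {f' : E → E}
    {L : NNReal} (hlip : LipschitzWith L f') (hf : ∀ z, HasGradientAt f (f' z) z) (y w : E) :
    f (y + w) ≤ f y + ⟪f' y, w⟫ + L * ‖w‖ ^ 2 := by
  set B := closedBall y ‖w‖
  have hder (z) (_ : z ∈ B) : HasFDerivWithinAt f (InnerProductSpace.toDual ℝ E (f' z)) B z :=
    (hf z).hasFDerivAt.hasFDerivWithinAt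
  have hbound (z) (hz : z ∈ B) :
      ‖InnerProductSpace.toDual ℝ E (f' z) - InnerProductSpace.toDual ℝ E (f' y)‖ ≤ L * ‖w‖ := by
    rw [← map_sub, LinearIsometryEquiv.norm_map, ← dist_eq_norm]
    exact (hlip.dist_le_mul z y).trans (mul_le_mul_of_nonneg_left hz L.coe_nonneg)
  have hyw : y + w ∈ B := by simp [B]
  have key := (convex_closedBall y ‖w‖).norm_image_sub_le_of_norm_hasFDerivWithin_le' hder
    hbound (mem_closedBall_self (norm_nonneg w)) hyw
  rw [add_sub_cancel_left, InnerProductSpace.toDual_apply_apply] at key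
  nlinarith [le_abs_self (f (y + w) - f y - ⟪f' y, w⟫),
    Real.norm_eq_abs (f (y + w) - f y - ⟪f' y, w⟫)]

section Step

variable {f : E → ℝ} {x g v : E} {M α σ : ℝ} {s : ℕ}

def armijoExponents (f : E → ℝ) (x g v : E) (α σ : ℝ) : Set ℕ :=
  {m | f (x + σ ^ m • v) ≤ f x + α * σ ^ m * ⟪g, v⟫}

theorem eq_zero_or_lt_of_isLeast_armijoExponents
    (hM : ∀ w, f (x + w) ≤ f x + ⟪g, w⟫ + M * ‖w‖ ^ 2) (hσ : 0 < σ)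
    (hs : IsLeast (armijoExponents f x g v α σ) s) :
    s = 0 ∨ σ * (1 - α) * -⟪g, v⟫ < M * ‖v‖ ^ 2 * σ ^ s := by
  rcases s with _ | m
  · exact .inl rfl
  refine .inr ?_
  have hm : 0 < σ ^ m := pow_pos hσ m
  have hfail : f x + α * σ ^ m * ⟪g, v⟫ < f (x + σ ^ m • v) :=
    not_le.1 fun h => by have := hs.2 h; omega
  have hquad := hM (σ ^ m • v)
  rw [inner_smul_right, norm_smul, Real.norm_eq_abs, abs_of_pos hm] at hquad
  have h : σ ^ m * ((1 - α) * -⟪g, v⟫) < σ ^ m * (M * ‖v‖ ^ 2 * σ ^ m) := by nlinarith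
  rw [pow_succ σ m]
  nlinarith [mul_lt_mul_of_pos_left (lt_of_mul_lt_mul_left h hm.le) hσ]

theorem armijo_sufficient_decrease (hM : ∀ w, f (x + w) ≤ f x + ⟪g, w⟫ + M * ‖w‖ ^ 2)
    (hα : α ∈ Ioo 0 1) (hσ : 0 < σ) {c C : ℝ} (hc : 0 ≤ c)
    (hdesc : c * ‖g‖ ^ 2 ≤ -⟪g, v⟫) (hv : ‖v‖ ≤ C * ‖g‖)
    (hs : IsLeast (armijoExponents f x g v α σ) s) :
    f (x + σ ^ s • v) ≤ f x - α * c * min 1 (σ * (1 - α) * c / (M * C ^ 2)) * ‖g‖ ^ 2 := by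
  -- `min 1 (σ * (1 - α) * c / (M * C ^ 2))` bounds the accepted step `σ ^ s` from below.
  set m := min 1 (σ * (1 - α) * c / (M * C ^ 2))
  suffices key : c * m * ‖g‖ ^ 2 ≤ σ ^ s * -⟪g, v⟫ by
    have harmijo : f (x + σ ^ s • v) ≤ f x + α * σ ^ s * ⟪g, v⟫ := hs.1
    nlinarith [mul_le_mul_of_nonneg_left key hα.1.le]
  have hσα : 0 ≤ σ * (1 - α) := mul_nonneg hσ.le (sub_nonneg.2 hα.2.le)
  rcases eq_zero_or_lt_of_isLeast_armijoExponents hM hσ hs with rfl | hlt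
  · calc c * m * ‖g‖ ^ 2 ≤ c * 1 * ‖g‖ ^ 2 := by gcongr; exact min_le_left _ _
      _ ≤ σ ^ 0 * -⟪g, v⟫ := by simpa using hdesc
  by_cases hP : 0 < M * C ^ 2
  · have hv2 : ‖v‖ ^ 2 ≤ C ^ 2 * ‖g‖ ^ 2 := by
      rw [← mul_pow]; exact pow_le_pow_left₀ (norm_nonneg v) hv 2
    have hM0 : 0 < M := pos_of_mul_pos_left hP (sq_nonneg C)
    have hstep : σ * (1 - α) * c * ‖g‖ ^ 2 ≤ σ ^ s * ‖g‖ ^ 2 * (M * C ^ 2) := by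
      nlinarith [mul_le_mul_of_nonneg_left hdesc hσα,
        mul_le_mul_of_nonneg_left hv2 (mul_nonneg hM0.le (pow_pos hσ s).le)]
    calc c * m * ‖g‖ ^ 2 ≤ c * (σ * (1 - α) * c * ‖g‖ ^ 2 / (M * C ^ 2)) := by
          rw [mul_div_right_comm, mul_assoc]; gcongr; exact min_le_right _ _
      _ ≤ c * (σ ^ s * ‖g‖ ^ 2) := by gcongr; exact (div_le_iff₀ hP).2 hstep
      _ ≤ σ ^ s * -⟪g, v⟫ := by nlinarith [pow_pos hσ s]
  · have hm : m ≤ 0 := (min_le_right _ _).trans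
      (div_nonpos_of_nonneg_of_nonpos (mul_nonneg hσα hc) (not_lt.1 hP))
    nlinarith [mul_nonneg hc (sq_nonneg ‖g‖), pow_pos hσ s,
      (mul_nonneg hc (sq_nonneg ‖g‖)).trans hdesc]

end Step

theorem tendsto_norm_gradient_of_armijo [CompleteSpace E] {f : E → ℝ} {f' : E → E}
    (hf : ∀ z, HasGradientAt f (f' z) z) {L : NNReal} (hlip : LipschitzWith L f') {α σ : ℝ}
    (hα : α ∈ Ioo 0 1) (hσ : 0 < σ) {c C : ℝ} (hc : 0 < c) (hC : 0 < C)
    {x v : ℕ → E} {s : ℕ → ℕ}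
    (hdesc : ∀ k, c * ‖f' (x k)‖ ^ 2 ≤ -⟪f' (x k), v k⟫) (hv : ∀ k, ‖v k‖ ≤ C * ‖f' (x k)‖)
    (hs : ∀ k, IsLeast (armijoExponents f (x k) (f' (x k)) (v k) α σ) (s k))
    (hrec : ∀ k, x (k + 1) = x k + σ ^ s k • v k) (hbdd : BddBelow (range fun k => f (x k))) :
    Tendsto (fun k => ‖f' (x k)‖) atTop (𝓝 0) := by
  set τ := α * c * min 1 (σ * (1 - α) * c / ((L + 1) * C ^ 2))
  have hτ : 0 < τ := mul_pos (mul_pos hα.1 hc)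
    (lt_min one_pos (div_pos (mul_pos (mul_pos hσ (sub_pos.2 hα.2)) hc) (by positivity)))
  -- `L + 1` rather than `L`, so that the step bound stays positive when `L = 0`.
  have hM (y w : E) : f (y + w) ≤ f y + ⟪f' y, w⟫ + (L + 1) * ‖w‖ ^ 2 := by
    nlinarith [hlip.le_add_inner_add_mul_sq hf y w, sq_nonneg ‖w‖]
  have hdec (k) : τ * ‖f' (x k)‖ ^ 2 ≤ f (x k) - f (x (k + 1)) := by
    rw [hrec]
    linarith [armijo_sufficient_decrease (hM (x k)) hα hσ hc.le (hdesc k) (hv k) (hs k)]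
  have hsq : Tendsto (fun k => ‖f' (x k)‖ ^ 2) atTop (𝓝 0) := by
    simpa [hτ.ne'] using (tendsto_zero_of_le_sub_succ hbdd
      (fun k => mul_nonneg hτ.le (sq_nonneg _)) hdec).const_mul τ⁻¹
  simpa using hsq.sqrt

end Armijo

theorem IsCompact.exists_pos_mul_sq_le_inner {X E : Type*} [TopologicalSpace X]
    [NormedAddCommGroup E] [InnerProductSpace ℝ E] [ProperSpace E] {K : Set X}
    (hK : IsCompact K) {G : X → E →L[ℝ] E} (hG : ContinuousOn G K)
    (hpos : ∀ y ∈ K, ∀ u ≠ 0, 0 < ⟪u, G y u⟫) :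
    ∃ c > 0, ∀ y ∈ K, ∀ u, c * ‖u‖ ^ 2 ≤ ⟪u, G y u⟫ := by
  have hcont : ContinuousOn (fun p : X × E => ⟪p.2, G p.1 p.2⟫) (K ×ˢ sphere 0 1) :=
    continuous_snd.continuousOn.inner
      ((hG.comp continuous_fst.continuousOn fun _ hp => hp.1).clm_apply
        continuous_snd.continuousOn)
  obtain ⟨c, hc, hcK⟩ := (hK.prod (isCompact_sphere 0 1)).exists_forall_le' hcont
    fun p hp => hpos p.1 hp.1 p.2 (ne_zero_of_mem_unit_sphere ⟨p.2, hp.2⟩)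
  refine ⟨c, hc, fun y hy u => ?_⟩
  rcases eq_or_ne u 0 with rfl | hu
  · simp
  have hu' : 0 < ‖u‖ := norm_pos_iff.2 hu
  have hw := hcK (y, ‖u‖⁻¹ • u) ⟨hy, by simp [norm_smul, hu'.ne']⟩
  have hscale : ⟪u, G y u⟫ = ‖u‖ ^ 2 * ⟪‖u‖⁻¹ • u, G y (‖u‖⁻¹ • u)⟫ := by
    rw [map_smul, real_inner_smul_left, real_inner_smul_right]
    field_simp
  rw [hscale, mul_comm]
  exact mul_le_mul_of_nonneg_left hw (sq_nonneg _)

theorem MapClusterPt.eq_of_tendsto_comp {ι X Y : Type*} [TopologicalSpace X]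
    [TopologicalSpace Y] [T2Space Y] {F : Filter ι} {x : ι → X} {p : X} {g : X → Y} {b : Y}
    (hp : MapClusterPt p F x) (hg : ContinuousAt g p) (hlim : Tendsto (g ∘ x) F (𝓝 b)) :
    g p = b :=
  by_contra fun hne => ((hp.continuousAt_comp hg).clusterPt.mono hlim).ne
    (disjoint_iff.1 (disjoint_nhds_nhds.2 hne))

theorem Nat.eventually_or_eventually_of_no_jump {p q : ℕ → Prop}
    (hpq : ∀ᶠ k in atTop, p k ∨ q k) (hjump : ∀ᶠ k in atTop, p k → ¬q (k + 1)) :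
    (∀ᶠ k in atTop, p k) ∨ ∀ᶠ k in atTop, q k := by
  obtain ⟨N, hN⟩ := eventually_atTop.1 (hpq.and hjump)
  by_cases hp : ∃ k₀ ≥ N, p k₀
  · obtain ⟨k₀, hk₀N, hk₀⟩ := hp
    refine .inl (eventually_atTop.2 ⟨k₀, fun k hk => ?_⟩)
    induction k, hk using Nat.le_induction with
    | base => exact hk₀
    | succ k hk ih => exact (hN (k + 1) (by omega)).1.resolve_right ((hN k (by omega)).2 ih)
  · push Not at hp
    exact .inr (eventually_atTop.2 ⟨N, fun k hk => (hN k hk).1.resolve_left (hp k hk)⟩)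

section ClusterPoints

variable {X : Type*} [PseudoMetricSpace X] {x : ℕ → X} {K : Set X}

theorem MapClusterPt.mem_cthickening_of_eventually {ε : ℝ} {A : Set X} {p : X}
    (hp : MapClusterPt p atTop x) (hA : ∀ᶠ k in atTop, x k ∈ thickening ε A) :
    p ∈ cthickening ε A :=
  closure_thickening_subset_cthickening ε A (hp.clusterPt.mem_closure_of_mem _ hA)

theorem isCompact_setOf_mapClusterPt (hK : IsCompact K) (hxK : ∀ᶠ k in atTop, x k ∈ K) :
    IsCompact {p | MapClusterPt p atTop x} :=
  hK.closure.of_isClosed_subset isClosed_setOfPred_clusterPt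
    fun _ hp => hp.clusterPt.mem_closure_of_mem _ hxK

theorem isConnected_setOf_mapClusterPt (hK : IsCompact K) (hxK : ∀ᶠ k in atTop, x k ∈ K)
    (hstep : Tendsto (fun k => dist (x (k + 1)) (x k)) atTop (𝓝 0)) :
    IsConnected {p | MapClusterPt p atTop x} := by
  set Ω := {p | MapClusterPt p atTop x}
  have hΩ : IsCompact Ω := isCompact_setOf_mapClusterPt hK hxK
  have hΩc : IsClosed Ω := isClosed_setOfPred_clusterPt
  refine ⟨(hK.exists_mapClusterPt (le_principal_iff.2 hxK)).imp fun _ h => h.2, ?_⟩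
  rw [isPreconnected_iff_subset_of_fully_disjoint_closed hΩc]
  intro u v hu hv hΩuv huv
  set A := Ω ∩ u
  set B := Ω ∩ v
  obtain ⟨δ, hδ, hdisj⟩ := (huv.mono inter_subset_right inter_subset_right).exists_thickenings
    (hΩ.inter_right hu) (hΩc.inter hv)
  have hδ2 : 0 < δ / 2 := half_pos hδ
  have hnear : ∀ᶠ k in atTop, x k ∈ thickening (δ / 2) A ∨ x k ∈ thickening (δ / 2) B := by
    have hU : thickening (δ / 2) A ∪ thickening (δ / 2) B ∈ 𝓝ˢ Ω :=
      (isOpen_thickening.union isOpen_thickening).mem_nhdsSet.2 fun p hp =>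
        (hΩuv hp).imp (fun h => self_subset_thickening hδ2 A ⟨hp, h⟩)
          (fun h => self_subset_thickening hδ2 B ⟨hp, h⟩)
    filter_upwards [(hK.tendsto_nhdsSet_of_mapClusterPt hxK fun p _ hp => hp).eventually_mem hU]
      with k hk using hk
  have hjump : ∀ᶠ k in atTop,
      x k ∈ thickening (δ / 2) A → x (k + 1) ∉ thickening (δ / 2) B := by
    filter_upwards [hstep.eventually_lt_const hδ2] with k hk hkA hkB
    obtain ⟨a, ha, hxa⟩ := mem_thickening_iff.1 hkA
    have hA : x (k + 1) ∈ thickening δ A :=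
      mem_thickening_iff.2 ⟨a, ha, by linarith [dist_triangle (x (k + 1)) (x k) a]⟩
    exact hdisj.ne_of_mem hA (thickening_mono (half_le_self hδ.le) B hkB) rfl
  -- A tail trapped near `C` has all its cluster points within `δ` of `C`, hence none in `D`.
  have hempty {C D : Set X} (hCD : Disjoint (thickening δ C) (thickening δ D))
      (hC : ∀ᶠ k in atTop, x k ∈ thickening (δ / 2) C) (hD : D ⊆ Ω) : D = ∅ :=
    eq_empty_of_forall_notMem fun p hp => hCD.ne_of_mem
      (cthickening_subset_thickening' hδ (half_lt_self hδ) C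
        ((hD hp).mem_cthickening_of_eventually hC))
      (self_subset_thickening hδ D hp) rfl
  rcases Nat.eventually_or_eventually_of_no_jump hnear hjump with hA | hB
  · have hB : B = ∅ := hempty hdisj hA inter_subset_left
    exact .inl fun p hp => (hΩuv hp).resolve_right fun h => hB.subset ⟨hp, h⟩
  · have hA : A = ∅ := hempty hdisj.symm hB inter_subset_left
    exact .inr fun p hp => (hΩuv hp).resolve_left fun h => hA.subset ⟨hp, h⟩

end ClusterPoints

theorem armijo_quasiNewton_convergence {E : Type*} [NormedAddCommGroup E]
    [InnerProductSpace ℝ E] [ProperSpace E] {f : E → ℝ} {f' : E → E}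
    (hf : ∀ z, HasGradientAt f (f' z) z) {L : NNReal} (hlip : LipschitzWith L f')
    {G : E → E →L[ℝ] E} (hG : Continuous G) (hGpos : ∀ y, ∀ u ≠ 0, 0 < ⟪u, G y u⟫) {α σ : ℝ}
    (hα : α ∈ Ioo 0 1) (hσ : σ ∈ Ioo 0 1)
    {x v : ℕ → E} {s : ℕ → ℕ} (hK : IsCompact {y | f y ≤ f (x 0)})
    (hv : ∀ k, v k = -G (x k) (f' (x k)))
    (hs : ∀ k, IsLeast (armijoExponents f (x k) (f' (x k)) (v k) α σ) (s k))
    (hrec : ∀ k, x (k + 1) = x k + σ ^ s k • v k) :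
    Tendsto (fun k => ‖f' (x k)‖) atTop (𝓝 0)
    ∧ Tendsto (fun k => ‖x (k + 1) - x k‖) atTop (𝓝 0)
    ∧ (∀ p, MapClusterPt p atTop x → f' p = 0)
    ∧ IsCompact {p | MapClusterPt p atTop x}
    ∧ IsConnected {p | MapClusterPt p atTop x} := by
  have hinner (k) : ⟪f' (x k), v k⟫ = -⟪f' (x k), G (x k) (f' (x k))⟫ := by
    rw [hv, inner_neg_right]
  have hdec (k) : f (x (k + 1)) ≤ f (x k) := by
    have harmijo : f (x (k + 1)) ≤ f (x k) + α * σ ^ s k * ⟪f' (x k), v k⟫ := hrec k ▸ (hs k).1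
    have hq : 0 ≤ ⟪f' (x k), G (x k) (f' (x k))⟫ := by
      rcases eq_or_ne (f' (x k)) 0 with h | h
      · simp [h]
      · exact (hGpos _ _ h).le
    nlinarith [mul_pos hα.1 (pow_pos hσ.1 (s k)), hinner k]
  have hxK (k) : x k ∈ {y | f y ≤ f (x 0)} :=
    antitone_nat_of_succ_le (f := fun k => f (x k)) hdec (Nat.zero_le k)
  have hfc : Continuous f := continuous_iff_continuousAt.2 fun z => (hf z).continuousAt
  have hbdd : BddBelow (range fun k => f (x k)) :=
    (hK.bddBelow_image hfc.continuousOn).mono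
      (range_subset_iff.2 fun k => mem_image_of_mem f (hxK k))
  obtain ⟨c, hc, hcK⟩ := hK.exists_pos_mul_sq_le_inner hG.continuousOn fun y _ => hGpos y
  obtain ⟨C, hCK⟩ := hK.exists_bound_of_continuousOn hG.continuousOn
  have hvC (k) : ‖v k‖ ≤ max C 1 * ‖f' (x k)‖ := by
    rw [hv, norm_neg]
    exact (G (x k)).le_of_opNorm_le ((hCK _ (hxK k)).trans (le_max_left C 1)) _
  have hgrad := tendsto_norm_gradient_of_armijo hf hlip hα hσ.1 hc (lt_max_of_lt_right one_pos)
    (fun k => by rw [hinner, neg_neg]; exact hcK _ (hxK k) _) hvC hs hrec hbdd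
  have hstep : Tendsto (fun k => ‖x (k + 1) - x k‖) atTop (𝓝 0) := by
    refine squeeze_zero (fun _ => norm_nonneg _) (fun k => ?_)
      (by simpa using hgrad.const_mul (max C 1))
    rw [hrec, add_sub_cancel_left, norm_smul, norm_pow, Real.norm_of_nonneg hσ.1.le]
    exact (mul_le_of_le_one_left (norm_nonneg _) (pow_le_one₀ hσ.1.le hσ.2.le)).trans (hvC k)
  have hxK' : ∀ᶠ k in atTop, x k ∈ {y | f y ≤ f (x 0)} := .of_forall hxK
  exact ⟨hgrad, hstep,
    fun p hp => hp.eq_of_tendsto_comp hlip.continuous.continuousAt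
      (tendsto_zero_iff_norm_tendsto_zero.2 hgrad),
    isCompact_setOf_mapClusterPt hK hxK',
    isConnected_setOf_mapClusterPt hK hxK' (by simpa [dist_eq_norm] using hstep)⟩

theorem Matrix.PosDef.inner_toEuclideanCLM_pos {ι : Type*} [Fintype ι] [DecidableEq ι]
    {A : Matrix ι ι ℝ} (hA : A.PosDef) {u : EuclideanSpace ℝ ι} (hu : u ≠ 0) :
    0 < ⟪u, toEuclideanCLM (𝕜 := ℝ) A u⟫ := by
  rw [inner_toEuclideanCLM]
  simpa using hA.dotProduct_mulVec_pos (x := WithLp.ofLp u) (by simpa using hu)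

theorem Continuous.toEuclideanCLM_inv {X ι : Type*} [TopologicalSpace X] [Fintype ι]
    [DecidableEq ι] {H : X → Matrix ι ι ℝ} (hH : Continuous H) (hdet : ∀ y, (H y).det ≠ 0) :
    Continuous fun y => Matrix.toEuclideanCLM (𝕜 := ℝ) (H y)⁻¹ := by
  have hinv : Continuous fun y => (H y)⁻¹ := continuous_iff_continuousAt.2 fun y =>
    (continuousAt_matrix_inv _ (by rw [Ring.inverse_eq_inv']; exact continuousAt_inv₀ (hdet y))
      |>.comp hH.continuousAt)
  exact (LinearMap.continuous_of_finiteDimensional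
    (Matrix.toEuclideanCLM (𝕜 := ℝ) (n := ι)).toAlgEquiv.toLinearMap).comp hinv

theorem mm_iterates_converge_to_stationary_points_general {n : ℕ}
    (f : EuclideanSpace ℝ (Fin n) → ℝ)
    (f' : EuclideanSpace ℝ (Fin n) → EuclideanSpace ℝ (Fin n))
    (hf : ∀ x, HasGradientAt f (f' x) x)
    (L : NNReal) (hlip : LipschitzWith L f')
    (hcoercive : ∀ t : ℝ, IsCompact {x : EuclideanSpace ℝ (Fin n) | f x ≤ t})
    (H : EuclideanSpace ℝ (Fin n) → Matrix (Fin n) (Fin n) ℝ)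
    (hHcont : Continuous H) (hHpd : ∀ x, (H x).PosDef)
    (α : ℝ) (hα : α ∈ Set.Ioo (0:ℝ) 1)
    (σ : ℝ) (hσ : σ ∈ Set.Ioo (0:ℝ) 1)
    (x v : ℕ → EuclideanSpace ℝ (Fin n)) (s : ℕ → ℕ)
    (hv : ∀ k, ∀ i, v k i = -((H (x k))⁻¹.mulVec (fun j => f' (x k) j) i))
    (hs : ∀ k, IsLeast {m : ℕ |
      f (x k + σ^m • v k) ≤ f (x k) + α * σ^m * ⟪f' (x k), v k⟫} (s k))
    (hrec : ∀ k, x (k + 1) = x k + σ^(s k) • v k) :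
    Tendsto (fun k => ‖f' (x k)‖) atTop (nhds 0)
    ∧ Tendsto (fun k => ‖x (k + 1) - x k‖) atTop (nhds 0)
    ∧ (∀ p, MapClusterPt p atTop x → f' p = 0)
    ∧ IsCompact {p | MapClusterPt p atTop x}
    ∧ IsConnected {p | MapClusterPt p atTop x} := by
  have hHinv := hHcont.toEuclideanCLM_inv fun y => (hHpd y).det_pos.ne'
  refine armijo_quasiNewton_convergence hf hlip hHinv
    (fun y _ hu => (hHpd y).inv.inner_toEuclideanCLM_pos hu) hα hσ (hcoercive _) (fun k => ?_)
    hs hrec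
  ext i
  simp [hv]

/-- For the Armijo-safeguarded quasi-Newton iteration, (i) `‖∇f(x_k)‖ → 0`,
(ii) `‖x_{k+1} − x_k‖ → 0`, (iii) every limit point of `(x_k)` is a stationary point of `f`,
and (iv) the set of limit points is compact and connected. -/
theorem mm_iterates_converge_to_stationary_points {n : ℕ}
    (f : EuclideanSpace ℝ (Fin n) → ℝ)
    (f' : EuclideanSpace ℝ (Fin n) → EuclideanSpace ℝ (Fin n))
    (hf : ∀ x, HasGradientAt f (f' x) x)
    (L : NNReal) (hlip : LipschitzWith L f')
    (hcoercive : ∀ t : ℝ, IsCompact {x : EuclideanSpace ℝ (Fin n) | f x ≤ t})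
    (H : EuclideanSpace ℝ (Fin n) → Matrix (Fin n) (Fin n) ℝ)
    (hHcont : Continuous H) (hHpd : ∀ x, (H x).PosDef)
    (α : ℝ) (hα : α ∈ Set.Ioo (0:ℝ) 1)
    (σ : ℝ) (hσ : σ ∈ Set.Ioo (0:ℝ) 1)
    (x₀ : EuclideanSpace ℝ (Fin n))
    (x v : ℕ → EuclideanSpace ℝ (Fin n)) (s : ℕ → ℕ)
    (hx0 : x 0 = x₀)
    (hv : ∀ k, ∀ i, v k i = -((H (x k))⁻¹.mulVec (fun j => f' (x k) j) i))
    (hs : ∀ k, IsLeast {m : ℕ |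
      f (x k + σ^m • v k) ≤ f (x k) + α * σ^m * ⟪f' (x k), v k⟫} (s k))
    (hrec : ∀ k, x (k + 1) = x k + σ^(s k) • v k) :
    Tendsto (fun k => ‖f' (x k)‖) atTop (nhds 0)
    ∧ Tendsto (fun k => ‖x (k + 1) - x k‖) atTop (nhds 0)
    ∧ (∀ p, MapClusterPt p atTop x → f' p = 0)
    ∧ IsCompact {p | MapClusterPt p atTop x}
    ∧ IsConnected {p | MapClusterPt p atTop x} :=
  mm_iterates_converge_to_stationary_points_general f f' hf L hlip hcoercive H hHcont hHpd α hα σ hσ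
    x v s hv hs hrec
end

section
/- Let f : ℝⁿ → ℝ be differentiable with L-Lipschitz gradient, let α, σ ∈ (0,1), and for (x, v) ∈ ℝⁿ × ℝⁿ define the set S(x, v) = { x + σᵏ v : k a nonnegative integer with f(x + σᵏ v) ≤ f(x) + α σᵏ ⟨∇f(x), v⟩ }. Suppose x_j → x and v_j → v with v ≠ 0, and y_j ∈ S(x_j, v_j) with y_j → y and y ≠ x. Then y ∈ S(x, v). -/
open scoped RealInnerProductSpace
open Filter Topology

/-! Since `y ≠ x`, the accepted step sizes `σ ^ k j = ‖ys j - xs j‖ / ‖vs j‖` converge to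
`‖y - x‖ / ‖v‖ > 0`, so the exponents `k j` stay bounded and some `K` occurs infinitely often.
For fixed `K` the triples `(x, v, x + σ ^ K • v)` accepted by the Armijo test form a closed set,
so the limit `(x, v, y)` of the triples with `k j = K` is accepted with the same exponent. -/

section

variable {ι : Type*} {l : Filter ι}

theorem tendsto_coeff_of_tendsto_smul {E : Type*} [NormedAddCommGroup E] [NormedSpace ℝ E]
    {c : ι → ℝ} {u : ι → E} {w u₀ : E} (hc : ∀ i, 0 ≤ c i)
    (hw : Tendsto (fun i => c i • u i) l (𝓝 w)) (hu : Tendsto u l (𝓝 u₀)) (hu₀ : u₀ ≠ 0) :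
    Tendsto c l (𝓝 (‖w‖ / ‖u₀‖)) := by
  have hu₀_norm : ‖u₀‖ ≠ 0 := norm_ne_zero_iff.2 hu₀
  have hc_eq : (fun i => ‖c i • u i‖ / ‖u i‖) =ᶠ[l] c := by
    filter_upwards [hu.norm.eventually_ne hu₀_norm] with i hi
    rw [norm_smul, Real.norm_of_nonneg (hc i), mul_div_cancel_right₀ _ hi]
  exact (hw.norm.div hu.norm hu₀_norm).congr' hc_eq

theorem eventually_lt_of_tendsto_pow {σ t : ℝ} {k : ι → ℕ} (hσ₀ : 0 < σ) (hσ₁ : σ < 1)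
    (ht : 0 < t) (h : Tendsto (fun i => σ ^ k i) l (𝓝 t)) : ∃ N, ∀ᶠ i in l, k i < N := by
  obtain ⟨N, hN⟩ := exists_pow_lt_of_lt_one ht hσ₁
  exact ⟨N, (h.eventually_const_lt hN).mono fun i hi =>
    (pow_lt_pow_iff_right_of_lt_one₀ hσ₀ hσ₁).1 hi⟩

theorem exists_frequently_eq_of_eventually_lt [l.NeBot] {k : ι → ℕ} {N : ℕ}
    (h : ∀ᶠ i in l, k i < N) : ∃ K, ∃ᶠ i in l, k i = K := by
  have : ∃ᶠ i in l, ∃ K ∈ Finset.range N, k i = K :=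
    (h.mono fun i hi => ⟨k i, Finset.mem_range.2 hi, rfl⟩).frequently
  obtain ⟨K, -, hK⟩ := (Finset.frequently_exists _).1 this
  exact ⟨K, hK⟩

end

theorem isClosed_setOf_armijo_step {E : Type*} [NormedAddCommGroup E] [InnerProductSpace ℝ E]
    {f : E → ℝ} {f' : E → E} (hf : Continuous f) (hf' : Continuous f') (α η : ℝ) :
    IsClosed {p : (E × E) × E | p.2 = p.1.1 + η • p.1.2 ∧
      f (p.1.1 + η • p.1.2) ≤ f p.1.1 + α * η * ⟪f' p.1.1, p.1.2⟫} := by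
  rw [Set.ofPred_and]
  exact (isClosed_eq (by fun_prop) (by fun_prop)).inter (isClosed_le (by fun_prop) (by fun_prop))

theorem armijo_map_closed_general {n : ℕ}
    (f : EuclideanSpace ℝ (Fin n) → ℝ)
    (f' : EuclideanSpace ℝ (Fin n) → EuclideanSpace ℝ (Fin n))
    (hf : ∀ z, HasGradientAt f (f' z) z)
    (L : NNReal) (hlip : LipschitzWith L f')
    (α : ℝ)
    (σ : ℝ) (hσ : σ ∈ Set.Ioo (0:ℝ) 1)
    (xs vs ys : ℕ → EuclideanSpace ℝ (Fin n))
    (x v y : EuclideanSpace ℝ (Fin n))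
    (hxs : Tendsto xs atTop (nhds x))
    (hvs : Tendsto vs atTop (nhds v))
    (hys : Tendsto ys atTop (nhds y))
    (hvne : v ≠ 0) (hyne : y ≠ x)
    (hmem : ∀ j, ∃ k : ℕ, ys j = xs j + σ^k • vs j ∧
      f (xs j + σ^k • vs j) ≤ f (xs j) + α * σ^k * ⟪f' (xs j), vs j⟫) :
    ∃ k : ℕ, y = x + σ^k • v ∧
      f (x + σ^k • v) ≤ f x + α * σ^k * ⟪f' x, v⟫ := by
  choose k hk_step hk_armijo using hmem
  have hstep : Tendsto (fun j => σ ^ k j) atTop (𝓝 (‖y - x‖ / ‖v‖)) :=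
    tendsto_coeff_of_tendsto_smul (fun j => pow_nonneg hσ.1.le _)
      ((hys.sub hxs).congr fun j => by rw [hk_step, add_sub_cancel_left]) hvs hvne
  have hlim_pos : 0 < ‖y - x‖ / ‖v‖ :=
    div_pos (norm_pos_iff.2 (sub_ne_zero.2 hyne)) (norm_pos_iff.2 hvne)
  obtain ⟨N, hN⟩ := eventually_lt_of_tendsto_pow hσ.1 hσ.2 hlim_pos hstep
  obtain ⟨K, hK⟩ := exists_frequently_eq_of_eventually_lt hN
  have hfc : Continuous f := continuous_iff_continuousAt.2 fun z => (hf z).continuousAt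
  have hclosed := isClosed_setOf_armijo_step hfc hlip.continuous α (σ ^ K)
  exact ⟨K, hclosed.mem_of_frequently_of_tendsto (hK.mono fun j hj => hj ▸ ⟨hk_step j, hk_armijo j⟩)
    ((hxs.prodMk_nhds hvs).prodMk_nhds hys)⟩

/-- The Armijo step point-to-set map
`S(x, v) = {x + σᵏ v : k ∈ ℕ, f(x + σᵏ v) ≤ f(x) + ασᵏ⟨∇f(x), v⟩}` is closed at `(x, v)` with
`v ≠ 0`, along sequences whose images converge to a point `y ≠ x`. -/
theorem armijo_map_closed {n : ℕ}
    (f : EuclideanSpace ℝ (Fin n) → ℝ)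
    (f' : EuclideanSpace ℝ (Fin n) → EuclideanSpace ℝ (Fin n))
    (hf : ∀ z, HasGradientAt f (f' z) z)
    (L : NNReal) (hlip : LipschitzWith L f')
    (α : ℝ) (hα : α ∈ Set.Ioo (0:ℝ) 1)
    (σ : ℝ) (hσ : σ ∈ Set.Ioo (0:ℝ) 1)
    (xs vs ys : ℕ → EuclideanSpace ℝ (Fin n))
    (x v y : EuclideanSpace ℝ (Fin n))
    (hxs : Tendsto xs atTop (nhds x))
    (hvs : Tendsto vs atTop (nhds v))
    (hys : Tendsto ys atTop (nhds y))
    (hvne : v ≠ 0) (hyne : y ≠ x)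
    (hmem : ∀ j, ∃ k : ℕ, ys j = xs j + σ^k • vs j ∧
      f (xs j + σ^k • vs j) ≤ f (xs j) + α * σ^k * ⟪f' (xs j), vs j⟫) :
    ∃ k : ℕ, y = x + σ^k • v ∧
      f (x + σ^k • v) ≤ f x + α * σ^k * ⟪f' x, v⟫ :=
  armijo_map_closed_general f f' hf L hlip α σ hσ xs vs ys x v y hxs hvs hys hvne hyne hmem
end

section
/- Let φ : ℝⁿ → ℝ be strictly convex and differentiable, and suppose its Fenchel conjugate φ*(y) = sup_x (⟨y, x⟩ − φ(x)) is differentiable with ∇φ* = (∇φ)⁻¹. Let a ∈ ℝⁿ be nonzero, c ∈ ℝ, and let HP(a, c) = {z : ⟨a, z⟩ = c}. Fix x ∈ ℝⁿ, and suppose γ ∈ ℝ minimizes the function γ̃ ↦ φ*(∇φ(x) − γ̃ a) + γ̃ c over ℝ. Then the point p = ∇φ*(∇φ(x) − γ a) is the Bregman projection of x onto HP(a, c) with respect to φ; that is, ⟨a, p⟩ = c and D_φ(p, x) ≤ D_φ(z, x) for every z with ⟨a, z⟩ = c. -/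
/-!
The function `t ↦ φ*(∇φ(x) − t a) + t c` has derivative `c − ⟪a, ∇φ*(∇φ(x) − t a)⟫`, so its
minimality at `γ` puts `p` on the hyperplane. Since `∇φ(p) = ∇φ(x) − γ a`, the first-order
inequality for the convex function `φ` at `p` gives, for every `z` on the hyperplane,
`φ z ≥ φ p + ⟪∇φ(x) − γ a, z − p⟫ = φ p + ⟪∇φ(x), z − p⟫`, which is `D_φ(p, x) ≤ D_φ(z, x)`.
-/

open scoped RealInnerProductSpace
open Set

theorem ConvexOn.add_fderiv_sub_le {E : Type*} [NormedAddCommGroup E] [NormedSpace ℝ E]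
    {f : E → ℝ} {f' : E →L[ℝ] ℝ} {s : Set E} {p z : E}
    (hf : ConvexOn ℝ s f) (hp : p ∈ s) (hz : z ∈ s) (hf' : HasFDerivAt f f' p) :
    f p + f' (z - p) ≤ f z := by
  let L : ℝ →ᵃ[ℝ] E := AffineMap.lineMap p z
  have hL0 : L 0 = p := AffineMap.lineMap_apply_zero p z
  have hL1 : L 1 = z := AffineMap.lineMap_apply_one p z
  have hline : ConvexOn ℝ (L ⁻¹' s) (f ∘ L) := hf.comp_affineMap L
  have hderiv : HasDerivAt (f ∘ L) (f' (z - p)) 0 :=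
    (hL0 ▸ hf').comp_hasDerivAt (0 : ℝ) AffineMap.hasDerivAt_lineMap
  have hslope := hline.le_slope_of_hasDerivAt (x := 0) (y := 1)
    (by simpa [hL0]) (by simpa [hL1]) one_pos hderiv
  rw [slope_def_field, Function.comp_apply, Function.comp_apply, hL0, hL1] at hslope
  linarith

section

variable {F : Type*} [NormedAddCommGroup F] [InnerProductSpace ℝ F] [CompleteSpace F]

theorem ConvexOn.add_inner_gradient_sub_le {f : F → ℝ} {s : Set F} {g p z : F}
    (hf : ConvexOn ℝ s f) (hp : p ∈ s) (hz : z ∈ s) (hg : HasGradientAt f g p) :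
    f p + ⟪g, z - p⟫ ≤ f z :=
  hf.add_fderiv_sub_le hp hz hg.hasFDerivAt

theorem ConvexOn.sub_inner_le_of_hasGradientAt_sub_smul {f : F → ℝ} {s : Set F} {g a p z : F}
    {γ : ℝ} (hf : ConvexOn ℝ s f) (hp : p ∈ s) (hz : z ∈ s)
    (hgrad : HasGradientAt f (g - γ • a) p) (hza : ⟪a, z⟫ = ⟪a, p⟫) :
    f p - ⟪g, p⟫ ≤ f z - ⟪g, z⟫ := by
  have hfirst := hf.add_inner_gradient_sub_le hp hz hgrad
  simp only [inner_sub_left, inner_sub_right, real_inner_smul_left, hza] at hfirst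
  linarith

theorem HasGradientAt.hasDerivAt_sub_smul {f : F → ℝ} {g y a : F} {t : ℝ}
    (hg : HasGradientAt f g (y - t • a)) :
    HasDerivAt (fun s : ℝ => f (y - s • a)) (-⟪g, a⟫) t := by
  have hcurve : HasDerivAt (fun s : ℝ => y - s • a) (-a) t := by
    simpa using ((hasDerivAt_id t).smul_const a).const_sub y
  simpa [Function.comp_def] using hg.hasFDerivAt.comp_hasDerivAt t hcurve

end

theorem bregman_projection_onto_hyperplane_general {n : ℕ}
    (φ : EuclideanSpace ℝ (Fin n) → ℝ) (hφ : StrictConvexOn ℝ Set.univ φ)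
    (φ' : EuclideanSpace ℝ (Fin n) → EuclideanSpace ℝ (Fin n))
    (hφd : ∀ z, HasGradientAt φ (φ' z) z)
    (φstar : EuclideanSpace ℝ (Fin n) → ℝ)
    -- `φstar` is differentiable with gradient `φs' = (∇φ)⁻¹`
    (φs' : EuclideanSpace ℝ (Fin n) → EuclideanSpace ℝ (Fin n))
    (hφsd : ∀ y, HasGradientAt φstar (φs' y) y)
    (hinv₂ : ∀ y, φ' (φs' y) = y)
    (a : EuclideanSpace ℝ (Fin n)) (c : ℝ)
    (x : EuclideanSpace ℝ (Fin n)) (γ : ℝ)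
    (hγ : ∀ t : ℝ, φstar (φ' x - γ • a) + γ * c ≤ φstar (φ' x - t • a) + t * c) :
    ⟪a, φs' (φ' x - γ • a)⟫ = c
    ∧ ∀ z : EuclideanSpace ℝ (Fin n), ⟪a, z⟫ = c →
        φ (φs' (φ' x - γ • a)) - φ x - ⟪φ' x, φs' (φ' x - γ • a) - x⟫
          ≤ φ z - φ x - ⟪φ' x, z - x⟫ := by
  set p := φs' (φ' x - γ • a)
  have hstationary : ⟪a, p⟫ = c := by
    have hmin : IsLocalMin (fun t => φstar (φ' x - t • a) + t * c) γ :=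
      Filter.Eventually.of_forall hγ
    have hzero := hmin.hasDerivAt_eq_zero
      ((hφsd (φ' x - γ • a)).hasDerivAt_sub_smul.add ((hasDerivAt_id γ).mul_const c))
    rw [one_mul] at hzero
    linarith [real_inner_comm a p]
  refine ⟨hstationary, fun z hz => ?_⟩
  have hgrad : HasGradientAt φ (φ' x - γ • a) p := hinv₂ (φ' x - γ • a) ▸ hφd p
  have hmin := hφ.convexOn.sub_inner_le_of_hasGradientAt_sub_smul (mem_univ p) (mem_univ z)
    hgrad (hz.trans hstationary.symm)
  simp only [inner_sub_right]
  linarith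

/-- If `γ` minimizes `γ̃ ↦ φ*(∇φ(x) − γ̃a) + γ̃c`, then
`p = ∇φ*(∇φ(x) − γa)` is the Bregman projection of `x` onto the hyperplane
`HP(a, c) = {z : ⟨a, z⟩ = c}`: it lies on the hyperplane and minimizes `D_φ(·, x)` there. -/
theorem bregman_projection_onto_hyperplane {n : ℕ}
    (φ : EuclideanSpace ℝ (Fin n) → ℝ) (hφ : StrictConvexOn ℝ Set.univ φ)
    (φ' : EuclideanSpace ℝ (Fin n) → EuclideanSpace ℝ (Fin n))
    (hφd : ∀ z, HasGradientAt φ (φ' z) z)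
    -- `φstar` is the Fenchel conjugate of `φ`, assumed finite
    (φstar : EuclideanSpace ℝ (Fin n) → ℝ)
    (hconj : ∀ y, IsLUB (Set.range fun z => ⟪y, z⟫ - φ z) (φstar y))
    -- `φstar` is differentiable with gradient `φs' = (∇φ)⁻¹`
    (φs' : EuclideanSpace ℝ (Fin n) → EuclideanSpace ℝ (Fin n))
    (hφsd : ∀ y, HasGradientAt φstar (φs' y) y)
    (hinv₁ : ∀ z, φs' (φ' z) = z) (hinv₂ : ∀ y, φ' (φs' y) = y)
    (a : EuclideanSpace ℝ (Fin n)) (ha : a ≠ 0) (c : ℝ)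
    (x : EuclideanSpace ℝ (Fin n)) (γ : ℝ)
    (hγ : ∀ t : ℝ, φstar (φ' x - γ • a) + γ * c ≤ φstar (φ' x - t • a) + t * c) :
    ⟪a, φs' (φ' x - γ • a)⟫ = c
    ∧ ∀ z : EuclideanSpace ℝ (Fin n), ⟪a, z⟫ = c →
        φ (φs' (φ' x - γ • a)) - φ x - ⟪φ' x, φs' (φ' x - γ • a) - x⟫
          ≤ φ z - φ x - ⟪φ' x, z - x⟫ :=
  bregman_projection_onto_hyperplane_general φ hφ φ' hφd φstar φs' hφsd hinv₂ a c x γ hγ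
end

section
/- Let φ(x) = Σ_{j=1}^n x_j log x_j be the negative entropy on the positive orthant ℝⁿ_{>0}, generating the Kullback–Leibler divergence KL(v, u) = Σ_j [v_j log(v_j/u_j) + u_j − v_j]. Let a ∈ ℝⁿ be nonzero, c ∈ ℝ, and x ∈ ℝⁿ_{>0}, and suppose γ ∈ ℝ minimizes γ̃ ↦ Σ_j x_j e^{−γ̃ a_j} + γ̃ c over ℝ. Then the componentwise product p = (x_j e^{−γ a_j})_{j=1}^n satisfies ⟨a, p⟩ = c and minimizes KL(z, x) over all z ∈ ℝⁿ_{>0} with ⟨a, z⟩ = c. -/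
/-!
The function `γ ↦ Σⱼ xⱼ e^{-γ aⱼ} + γ c` is the Lagrange dual of the KL projection: its derivative
vanishes at the minimizer `γ`, which says exactly that `p = x e^{-γ a}` lies on the hyperplane.
Since `log (pⱼ / xⱼ) = -γ aⱼ` is a multiple of `aⱼ`, the gradient term of the Bregman three-point
identity vanishes after summing over any `z` on the same hyperplane, leaving
`KL(z, x) = KL(p, x) + Σⱼ pⱼ klFun (zⱼ / pⱼ) ≥ KL(p, x)`.
-/

open Real Finset InformationTheory

lemma mul_log_div_add_sub_eq {x p z : ℝ} (hx : x ≠ 0) (hp : p ≠ 0) (hz : z ≠ 0) :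
    z * log (z / x) + x - z
      = p * log (p / x) + x - p + log (p / x) * (z - p) + p * klFun (z / p) := by
  have hlog : log (z / x) = log (z / p) + log (p / x) := by
    rw [← log_mul (div_ne_zero hz hp) (div_ne_zero hp hx), div_mul_div_cancel₀ hp]
  rw [klFun_apply, hlog]
  field_simp
  ring

lemma mul_log_div_add_sub_le {x p z : ℝ} (hx : 0 < x) (hp : 0 < p) (hz : 0 < z) :
    p * log (p / x) + x - p + log (p / x) * (z - p) ≤ z * log (z / x) + x - z := by
  rw [mul_log_div_add_sub_eq hx.ne' hp.ne' hz.ne']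
  linarith [mul_nonneg hp.le (klFun_nonneg (div_pos hz hp).le)]

lemma hasDerivAt_sum_mul_exp_neg_mul_add_mul {ι : Type*} [Fintype ι] (x a : ι → ℝ) (c γ : ℝ) :
    HasDerivAt (fun t => (∑ j, x j * exp (-(t * a j))) + t * c)
      (c - ∑ j, a j * (x j * exp (-(γ * a j)))) γ := by
  have hterm (j : ι) : HasDerivAt (fun t => x j * exp (-(t * a j)))
      (-(a j * (x j * exp (-(γ * a j))))) γ :=
    ((hasDerivAt_mul_const (a j)).fun_neg.exp.const_mul (x j)).congr_deriv (by ring)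
  exact ((HasDerivAt.fun_sum fun j _ => hterm j).add (hasDerivAt_mul_const c)).congr_deriv
    (by rw [sum_neg_distrib, neg_add_eq_sub])

lemma sum_mul_mul_exp_neg_mul_eq_of_isMinOn {ι : Type*} [Fintype ι] {x a : ι → ℝ} {c γ : ℝ}
    (hγ : IsMinOn (fun t => (∑ j, x j * exp (-(t * a j))) + t * c) Set.univ γ) :
    ∑ j, a j * (x j * exp (-(γ * a j))) = c := by
  have := (hγ.isLocalMin Filter.univ_mem).hasDerivAt_eq_zero
    (hasDerivAt_sum_mul_exp_neg_mul_add_mul x a c γ)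
  linarith

lemma sum_mul_log_div_exp_tilt_le {ι : Type*} [Fintype ι] {x a z : ι → ℝ} {γ : ℝ}
    (hx : ∀ j, 0 < x j) (hz : ∀ j, 0 < z j)
    (hza : ∑ j, a j * z j = ∑ j, a j * (x j * exp (-(γ * a j)))) :
    (∑ j, (x j * exp (-(γ * a j)) * log (x j * exp (-(γ * a j)) / x j)
          + x j - x j * exp (-(γ * a j))))
      ≤ ∑ j, (z j * log (z j / x j) + x j - z j) := by
  set p := fun j => x j * exp (-(γ * a j)) with hp_def
  have hp (j : ι) : 0 < p j := mul_pos (hx j) (exp_pos _)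
  have hlog (j : ι) : log (p j / x j) = -γ * a j := by
    rw [hp_def, mul_div_cancel_left₀ _ (hx j).ne', log_exp]
    ring
  have hlin : ∑ j, log (p j / x j) * (z j - p j) = 0 := by
    simp only [hlog, mul_assoc, ← mul_sum, mul_sub, sum_sub_distrib, hza]
    exact sub_self _
  calc ∑ j, (p j * log (p j / x j) + x j - p j)
      = ∑ j, (p j * log (p j / x j) + x j - p j + log (p j / x j) * (z j - p j)) := by
        rw [sum_add_distrib, hlin, add_zero]
    _ ≤ ∑ j, (z j * log (z j / x j) + x j - z j) :=
        sum_le_sum fun j _ => mul_log_div_add_sub_le (hx j) (hp j) (hz j)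

theorem kl_projection_onto_hyperplane_general {n : ℕ}
    (x : Fin n → ℝ) (hx : ∀ j, 0 < x j)
    (a : Fin n → ℝ) (c : ℝ) (γ : ℝ)
    (hγ : ∀ t : ℝ,
      (∑ j, x j * Real.exp (-(γ * a j))) + γ * c
        ≤ (∑ j, x j * Real.exp (-(t * a j))) + t * c) :
    (∑ j, a j * (x j * Real.exp (-(γ * a j)))) = c
    ∧ ∀ z : Fin n → ℝ, (∀ j, 0 < z j) → (∑ j, a j * z j) = c →
        (∑ j, ((x j * Real.exp (-(γ * a j))) * Real.log ((x j * Real.exp (-(γ * a j))) / x j)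
          + x j - x j * Real.exp (-(γ * a j))))
        ≤ (∑ j, (z j * Real.log (z j / x j) + x j - z j)) := by
  have hplane := sum_mul_mul_exp_neg_mul_eq_of_isMinOn (x := x) (a := a) fun t _ => hγ t
  exact ⟨hplane, fun z hz hzc => sum_mul_log_div_exp_tilt_le hx hz (hzc.trans hplane.symm)⟩

/-- If `γ` minimizes `γ̃ ↦ Σⱼ xⱼ e^{−γ̃ aⱼ} + γ̃c`, then the point
`p = (xⱼ e^{−γ aⱼ})ⱼ` lies on the hyperplane `⟨a, p⟩ = c` and minimizes the Kullback–Leibler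
divergence `KL(z, x) = Σⱼ [zⱼ log(zⱼ/xⱼ) + xⱼ − zⱼ]` over positive `z` on that hyperplane. -/
theorem kl_projection_onto_hyperplane {n : ℕ}
    (x : Fin n → ℝ) (hx : ∀ j, 0 < x j)
    (a : Fin n → ℝ) (ha : a ≠ 0) (c : ℝ) (γ : ℝ)
    (hγ : ∀ t : ℝ,
      (∑ j, x j * Real.exp (-(γ * a j))) + γ * c
        ≤ (∑ j, x j * Real.exp (-(t * a j))) + t * c) :
    (∑ j, a j * (x j * Real.exp (-(γ * a j)))) = c
    ∧ ∀ z : Fin n → ℝ, (∀ j, 0 < z j) → (∑ j, a j * z j) = c →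
        (∑ j, ((x j * Real.exp (-(γ * a j))) * Real.log ((x j * Real.exp (-(γ * a j))) / x j)
          + x j - x j * Real.exp (-(γ * a j))))
        ≤ (∑ j, (z j * Real.log (z j / x j) + x j - z j)) :=
  kl_projection_onto_hyperplane_general x hx a c γ hγ
end

section
/- Let C_1,…,C_r ⊆ ℝⁿ and Q_1,…,Q_s ⊆ ℝᵐ be nonempty closed convex sets, let A be an m×n real matrix, and let v_i, w_j > 0 be weights. Then the proximity function f(x) = (1/2) Σ_i v_i dist(x, C_i)² + (1/2) Σ_j w_j dist(Ax, Q_j)² is differentiable with gradient ∇f(x) = Σ_i v_i (x − P_{C_i}(x)) + Σ_j w_j Aᵀ(Ax − P_{Q_j}(Ax)), and ∇f is Lipschitz continuous with constant L = Σ_i v_i + ρ(AᵀA) · Σ_j w_j, where ρ(AᵀA) is the spectral radius of AᵀA (the square of the operator norm of A). -/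
/-!
If `p` is a nearest point of a convex set `S` to `x`, the variational inequality
`⟪x - p, c - p⟫ ≤ 0` for `c ∈ S` squeezes `½ d_S(z)² - ½ d_S(x)² - ⟪x - p, z - x⟫` between `0`
and `½ ‖z - x‖²`, so `½ d_S²` has gradient `x - P_S x`; the same inequality makes `I - P_S` firmly
nonexpansive, hence `1`-Lipschitz. Composing with `A` brings in the adjoint `Aᵀ` and a factor
`‖A‖²` in the Lipschitz constant.
-/

open Matrix
open scoped RealInnerProductSpace

open Metric ContinuousLinearMap

section Gradient

variable {E F : Type*} [NormedAddCommGroup E] [InnerProductSpace ℝ E] [CompleteSpace E]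
  [NormedAddCommGroup F] [InnerProductSpace ℝ F] [CompleteSpace F] {x : E}

theorem hasGradientAt_of_abs_sub_inner_le {f : E → ℝ} {f' : E} {c : ℝ}
    (h : ∀ z, |f z - f x - ⟪f', z - x⟫| ≤ c * ‖z - x‖ ^ 2) : HasGradientAt f f' x := by
  rw [hasGradientAt_iff_isLittleO_nhds_zero]
  refine Asymptotics.IsBigO.trans_isLittleO ?_ (Asymptotics.isLittleO_norm_pow_id one_lt_two)
  refine Asymptotics.IsBigO.of_bound c (Filter.Eventually.of_forall fun z => ?_)
  simpa [Real.norm_eq_abs] using h (x + z)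

theorem HasGradientAt.add {f g : E → ℝ} {f' g' : E} (hf : HasGradientAt f f' x)
    (hg : HasGradientAt g g' x) : HasGradientAt (fun y => f y + g y) (f' + g') x := by
  rw [hasGradientAt_iff_hasFDerivAt, map_add]
  exact hf.hasFDerivAt.add hg.hasFDerivAt

theorem HasGradientAt.sum_const_mul {ι : Type*} {s : Finset ι} {f : ι → E → ℝ} {f' : ι → E}
    (c : ι → ℝ) (h : ∀ i ∈ s, HasGradientAt (f i) (f' i) x) :
    HasGradientAt (fun y => ∑ i ∈ s, c i * f i y) (∑ i ∈ s, c i • f' i) x := by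
  rw [hasGradientAt_iff_hasFDerivAt, map_sum]
  simp only [map_smulₛₗ, starRingEnd_apply, star_trivial]
  exact HasFDerivAt.fun_sum fun i hi => (h i hi).hasFDerivAt.const_mul (c i)

theorem HasGradientAt.comp_continuousLinearMap {g : F → ℝ} {g' : F} (B : E →L[ℝ] F)
    (h : HasGradientAt g g' (B x)) : HasGradientAt (fun y => g (B y)) (adjoint B g') x := by
  have hdual : InnerProductSpace.toDual ℝ E (adjoint B g')
      = (InnerProductSpace.toDual ℝ F g').comp B := by
    ext z
    exact adjoint_inner_left B z g'
  rw [hasGradientAt_iff_hasFDerivAt, hdual]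
  exact h.hasFDerivAt.comp x B.hasFDerivAt

end Gradient

theorem Matrix.toEuclideanLin_transpose_apply {m n : Type*} [Fintype m] [Fintype n]
    [DecidableEq n] [DecidableEq m] (A : Matrix m n ℝ) (u : EuclideanSpace ℝ m) :
    toEuclideanLin Aᵀ u = adjoint (toEuclideanLin A).toContinuousLinearMap u := by
  rw [← conjTranspose_eq_transpose_of_trivial, toEuclideanLin_conjTranspose_eq_adjoint,
    ← LinearMap.adjoint_toContinuousLinearMap]
  rfl

theorem norm_sum_smul_le {E ι : Type*} [SeminormedAddCommGroup E] [NormedSpace ℝ E]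
    {s : Finset ι} {c : ι → ℝ} {a : ι → E} {M : ℝ} (hc : ∀ i ∈ s, 0 ≤ c i)
    (ha : ∀ i ∈ s, ‖a i‖ ≤ M) : ‖∑ i ∈ s, c i • a i‖ ≤ (∑ i ∈ s, c i) * M := by
  rw [Finset.sum_mul]
  refine norm_sum_le_of_le s fun i hi => ?_
  rw [norm_smul, Real.norm_of_nonneg (hc i hi)]
  exact mul_le_mul_of_nonneg_left (ha i hi) (hc i hi)

def IsNearestPoint {α : Type*} [PseudoMetricSpace α] (S : Set α) (u p : α) : Prop :=
  p ∈ S ∧ dist u p = infDist u S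

theorem IsNearestPoint.norm_sub_eq {E : Type*} [SeminormedAddCommGroup E] {S : Set E} {x p : E}
    (h : IsNearestPoint S x p) : ‖x - p‖ = infDist x S := by
  rw [← dist_eq_norm, h.2]

section NearestPoint

variable {E : Type*} [NormedAddCommGroup E] [InnerProductSpace ℝ E] {S : Set E} {x y p q : E}

theorem IsNearestPoint.inner_sub_nonpos (hS : Convex ℝ S) (h : IsNearestPoint S x p) {c : E}
    (hc : c ∈ S) : ⟪x - p, c - p⟫ ≤ 0 := by
  refine (norm_eq_iInf_iff_real_inner_le_zero hS h.1).1 ?_ c hc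
  simp only [h.norm_sub_eq, infDist_eq_iInf, dist_eq_norm]

theorem IsNearestPoint.norm_sq_sub_sub_le_inner (hS : Convex ℝ S) (hx : IsNearestPoint S x p)
    (hy : IsNearestPoint S y q) : ‖(x - p) - (y - q)‖ ^ 2 ≤ ⟪(x - p) - (y - q), x - y⟫ := by
  have hp := hx.inner_sub_nonpos hS hy.1
  have hq := hy.inner_sub_nonpos hS hx.1
  have hsplit : ⟪(x - p) - (y - q), x - y⟫
      = ‖(x - p) - (y - q)‖ ^ 2 - ⟪x - p, q - p⟫ - ⟪y - q, p - q⟫ := by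
    rw [← real_inner_self_eq_norm_sq]
    simp only [inner_sub_left, inner_sub_right, real_inner_comm]
    ring
  linarith

theorem IsNearestPoint.norm_sub_sub_le (hS : Convex ℝ S) (hx : IsNearestPoint S x p)
    (hy : IsNearestPoint S y q) : ‖(x - p) - (y - q)‖ ≤ ‖x - y‖ := by
  have h := (hx.norm_sq_sub_sub_le_inner hS hy).trans (real_inner_le_norm _ _)
  nlinarith [norm_nonneg ((x - p) - (y - q)), norm_nonneg (x - y)]

theorem IsNearestPoint.half_infDist_sq_le (hx : IsNearestPoint S x p) (z : E) :
    1 / 2 * infDist z S ^ 2 ≤ 1 / 2 * infDist x S ^ 2 + ⟪x - p, z - x⟫ + 1 / 2 * ‖z - x‖ ^ 2 := by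
  have hz : infDist z S ≤ ‖(x - p) + (z - x)‖ := by
    simpa [dist_eq_norm] using infDist_le_dist_of_mem (x := z) hx.1
  have := pow_le_pow_left₀ infDist_nonneg hz 2
  rw [norm_add_sq_real, hx.norm_sub_eq] at this
  linarith

theorem IsNearestPoint.half_infDist_sq_add_inner_le (hS : Convex ℝ S) (hx : IsNearestPoint S x p)
    (hy : IsNearestPoint S y q) :
    1 / 2 * infDist x S ^ 2 + ⟪x - p, y - x⟫ ≤ 1 / 2 * infDist y S ^ 2 := by
  have hq := hx.inner_sub_nonpos hS hy.1
  have hsplit : y - q = (x - p) + ((y - q) - (x - p)) := by abel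
  have hexp : ‖y - q‖ ^ 2 = ‖x - p‖ ^ 2 + 2 * ⟪x - p, y - x⟫ - 2 * ⟪x - p, q - p⟫
      + ‖(y - q) - (x - p)‖ ^ 2 := by
    rw [hsplit, norm_add_sq_real]
    simp only [add_sub_cancel_left, inner_sub_right]
    ring
  rw [← hx.norm_sub_eq, ← hy.norm_sub_eq]
  nlinarith [sq_nonneg ‖(y - q) - (x - p)‖]

theorem hasGradientAt_half_infDist_sq [CompleteSpace E] (hS : Convex ℝ S) {P : E → E}
    (hP : ∀ u, IsNearestPoint S u (P u)) (x : E) :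
    HasGradientAt (fun y => 1 / 2 * infDist y S ^ 2) (x - P x) x := by
  refine hasGradientAt_of_abs_sub_inner_le (c := 1 / 2) fun z => abs_le.2 ⟨?_, ?_⟩
  · linarith [(hP x).half_infDist_sq_add_inner_le hS (hP z), sq_nonneg ‖z - x‖]
  · linarith [(hP x).half_infDist_sq_le z]

theorem IsNearestPoint.norm_adjoint_sub_sub_le {F : Type*} [NormedAddCommGroup F]
    [InnerProductSpace ℝ F] [CompleteSpace E] [CompleteSpace F] {T : Set F} {a b : F}
    (hT : Convex ℝ T) (B : E →L[ℝ] F) (hx : IsNearestPoint T (B x) a)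
    (hy : IsNearestPoint T (B y) b) :
    ‖adjoint B ((B x - a) - (B y - b))‖ ≤ ‖B‖ ^ 2 * ‖x - y‖ :=
  calc _ ≤ ‖adjoint B‖ * ‖(B x - a) - (B y - b)‖ := le_opNorm _ _
    _ ≤ ‖B‖ * ‖B (x - y)‖ := by
      rw [LinearIsometryEquiv.norm_map, map_sub]
      gcongr
      exact hx.norm_sub_sub_le hT hy
    _ ≤ ‖B‖ * (‖B‖ * ‖x - y‖) := by gcongr; exact le_opNorm _ _
    _ = ‖B‖ ^ 2 * ‖x - y‖ := by ring

end NearestPoint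

theorem linear_proximity_gradient_lipschitz_general {n m r s : ℕ}
    (C : Fin r → Set (EuclideanSpace ℝ (Fin n)))
    (Q : Fin s → Set (EuclideanSpace ℝ (Fin m)))
    (hCcv : ∀ i, Convex ℝ (C i))
    (hQcv : ∀ j, Convex ℝ (Q j))
    (A : Matrix (Fin m) (Fin n) ℝ)
    (v : Fin r → ℝ) (w : Fin s → ℝ) (hv : ∀ i, 0 < v i) (hw : ∀ j, 0 < w j)
    (PC : Fin r → EuclideanSpace ℝ (Fin n) → EuclideanSpace ℝ (Fin n))
    (PQ : Fin s → EuclideanSpace ℝ (Fin m) → EuclideanSpace ℝ (Fin m))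
    (hPC : ∀ i u, PC i u ∈ C i ∧ dist u (PC i u) = Metric.infDist u (C i))
    (hPQ : ∀ j y, PQ j y ∈ Q j ∧ dist y (PQ j y) = Metric.infDist y (Q j)) :
    (∀ x : EuclideanSpace ℝ (Fin n),
      HasGradientAt
        (fun y => (1/2) * ∑ i, v i * (Metric.infDist y (C i))^2
          + (1/2) * ∑ j, w j * (Metric.infDist (Matrix.toEuclideanLin A y) (Q j))^2)
        (∑ i, v i • (x - PC i x)
          + ∑ j, w j • Matrix.toEuclideanLin Aᵀ
              (Matrix.toEuclideanLin A x - PQ j (Matrix.toEuclideanLin A x))) x)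
    ∧ (∀ x y : EuclideanSpace ℝ (Fin n),
        ‖(∑ i, v i • (x - PC i x)
            + ∑ j, w j • Matrix.toEuclideanLin Aᵀ
                (Matrix.toEuclideanLin A x - PQ j (Matrix.toEuclideanLin A x)))
          - (∑ i, v i • (y - PC i y)
            + ∑ j, w j • Matrix.toEuclideanLin Aᵀ
                (Matrix.toEuclideanLin A y - PQ j (Matrix.toEuclideanLin A y)))‖
        ≤ ((∑ i, v i) + ‖(Matrix.toEuclideanLin A).toContinuousLinearMap‖^2 * ∑ j, w j)
            * ‖x - y‖) := by
  set B := (toEuclideanLin A).toContinuousLinearMap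
  simp only [toEuclideanLin_transpose_apply]
  refine ⟨fun x => ?_, fun x y => ?_⟩
  · simp only [Finset.mul_sum, mul_left_comm (1 / 2 : ℝ)]
    exact (HasGradientAt.sum_const_mul v fun i _ =>
        hasGradientAt_half_infDist_sq (hCcv i) (hPC i) x).add
      (HasGradientAt.sum_const_mul w fun j _ =>
        (hasGradientAt_half_infDist_sq (hQcv j) (hPQ j) (B x)).comp_continuousLinearMap B)
  · rw [add_sub_add_comm, ← Finset.sum_sub_distrib, ← Finset.sum_sub_distrib]
    simp only [← smul_sub, ← map_sub]
    calc _ ≤ (∑ i, v i) * ‖x - y‖ + (∑ j, w j) * (‖B‖ ^ 2 * ‖x - y‖) :=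
          (norm_add_le _ _).trans (add_le_add
            (norm_sum_smul_le (fun i _ => (hv i).le) fun i _ =>
              IsNearestPoint.norm_sub_sub_le (hCcv i) (hPC i x) (hPC i y))
            (norm_sum_smul_le (fun j _ => (hw j).le) fun j _ =>
              IsNearestPoint.norm_adjoint_sub_sub_le (hQcv j) B (hPQ j _) (hPQ j _)))
      _ = _ := by ring

/-- For the linear split feasibility proximity function
`f(x) = (1/2)Σᵢ vᵢ dist(x, Cᵢ)² + (1/2)Σⱼ wⱼ dist(Ax, Qⱼ)²`, `f` is differentiable with gradient
`∇f(x) = Σᵢ vᵢ(x − P_{Cᵢ}x) + Σⱼ wⱼ Aᵀ(Ax − P_{Qⱼ}(Ax))`, and `∇f` is Lipschitz with constant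
`L = Σᵢ vᵢ + ρ(AᵀA)·Σⱼ wⱼ`, where `ρ(AᵀA)` is the square of the operator norm of `A`. -/
theorem linear_proximity_gradient_lipschitz {n m r s : ℕ}
    (C : Fin r → Set (EuclideanSpace ℝ (Fin n)))
    (Q : Fin s → Set (EuclideanSpace ℝ (Fin m)))
    (hCne : ∀ i, (C i).Nonempty) (hCcl : ∀ i, IsClosed (C i)) (hCcv : ∀ i, Convex ℝ (C i))
    (hQne : ∀ j, (Q j).Nonempty) (hQcl : ∀ j, IsClosed (Q j)) (hQcv : ∀ j, Convex ℝ (Q j))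
    (A : Matrix (Fin m) (Fin n) ℝ)
    (v : Fin r → ℝ) (w : Fin s → ℝ) (hv : ∀ i, 0 < v i) (hw : ∀ j, 0 < w j)
    (PC : Fin r → EuclideanSpace ℝ (Fin n) → EuclideanSpace ℝ (Fin n))
    (PQ : Fin s → EuclideanSpace ℝ (Fin m) → EuclideanSpace ℝ (Fin m))
    (hPC : ∀ i u, PC i u ∈ C i ∧ dist u (PC i u) = Metric.infDist u (C i))
    (hPQ : ∀ j y, PQ j y ∈ Q j ∧ dist y (PQ j y) = Metric.infDist y (Q j)) :
    (∀ x : EuclideanSpace ℝ (Fin n),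
      HasGradientAt
        (fun y => (1/2) * ∑ i, v i * (Metric.infDist y (C i))^2
          + (1/2) * ∑ j, w j * (Metric.infDist (Matrix.toEuclideanLin A y) (Q j))^2)
        (∑ i, v i • (x - PC i x)
          + ∑ j, w j • Matrix.toEuclideanLin Aᵀ
              (Matrix.toEuclideanLin A x - PQ j (Matrix.toEuclideanLin A x))) x)
    ∧ (∀ x y : EuclideanSpace ℝ (Fin n),
        ‖(∑ i, v i • (x - PC i x)
            + ∑ j, w j • Matrix.toEuclideanLin Aᵀ
                (Matrix.toEuclideanLin A x - PQ j (Matrix.toEuclideanLin A x)))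
          - (∑ i, v i • (y - PC i y)
            + ∑ j, w j • Matrix.toEuclideanLin Aᵀ
                (Matrix.toEuclideanLin A y - PQ j (Matrix.toEuclideanLin A y)))‖
        ≤ ((∑ i, v i) + ‖(Matrix.toEuclideanLin A).toContinuousLinearMap‖^2 * ∑ j, w j)
            * ‖x - y‖) :=
  linear_proximity_gradient_lipschitz_general C Q hCcv hQcv A v w hv hw PC PQ hPC hPQ
end
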